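/- Let α > 0. For every ω ∈ [0, π/2], one has Re[ χ_α(−(1+2iα·sin ω)) + (iπ/4)·(1+2iα·sin ω) ] = α·cos ω + α·(ω − π/2)·sin ω. Moreover, the function ω ↦ α·cos ω + α·(ω − π/2)·sin ω is strictly decreasing on [0, π/2] and vanishes on [0, π/2] only at ω = π/2. -/

import Mathlib

open Complex Real

/-- The principal branch of the complex square root. -/
noncomputable def csqrt (z : ℂ) : ℂ := z ^ (1 / 2 : ℂ)

/-- `χ_α(z) := (1/2)·√(4α²+(1+z)²) + ((1+z)/2)·log(2α/(1+z+√(4α²+(1+z)²)))`,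
with principal branches of square root and logarithm. -/
noncomputable def chi (α : ℝ) (z : ℂ) : ℂ :=
  (1 / 2 : ℂ) * csqrt (4 * (α : ℂ) ^ 2 + (1 + z) ^ 2) +
    (1 + z) / 2 * Complex.log (2 * (α : ℂ) / (1 + z + csqrt (4 * (α : ℂ) ^ 2 + (1 + z) ^ 2)))

/-!
On the segment `z = -(1 + 2iα sin ω)` one has `4α² + (1+z)² = (2α cos ω)²`, so for `|ω| ≤ π/2`
the square root is `2α cos ω` and the argument of the logarithm is
`2α / (2α (cos ω - i sin ω)) = exp (iω)`, whose principal logarithm is `iω`. Hence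
`χ_α(z) = α cos ω + α ω sin ω`, and adding `(iπ/4)(1 + 2iα sin ω)` shifts the real part by
`-(π/2) α sin ω`. The resulting profile has derivative `α (ω - π/2) cos ω < 0` on `(-π/2, π/2)`
and vanishes at `π/2`.
-/

lemma csqrt_ofReal_sq {x : ℝ} (hx : 0 ≤ x) : csqrt ((x : ℂ) ^ 2) = x := by
  rw [csqrt, ← ofReal_pow, show (1 / 2 : ℂ) = ((1 / 2 : ℝ) : ℂ) by norm_num,
    ← ofReal_cpow (by positivity), ← Real.sqrt_eq_rpow, Real.sqrt_sq hx]

lemma chi_neg_one_add_two_I_mul_sin {α ω : ℝ} (hα : 0 < α) (hω : ω ∈ Set.Icc (-(π / 2)) (π / 2)) :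
    chi α (-(1 + 2 * I * α * Real.sin ω)) = α * Real.cos ω + α * ω * Real.sin ω := by
  have hcos : 0 ≤ Real.cos ω := Real.cos_nonneg_of_mem_Icc hω
  set s := Real.sin ω with hs
  set c := Real.cos ω with hc
  have hexp : (c : ℂ) - I * s = exp (-(ω * I)) := by
    rw [← neg_mul, exp_mul_I, Complex.cos_neg, Complex.sin_neg, hs, hc, ofReal_cos, ofReal_sin]
    ring
  have hsq : 4 * (α : ℂ) ^ 2 + (1 + -(1 + 2 * I * α * s)) ^ 2 = ((2 * α * c : ℝ) : ℂ) ^ 2 := by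
    have h : (s : ℂ) ^ 2 + (c : ℂ) ^ 2 = 1 := by exact_mod_cast Real.sin_sq_add_cos_sq ω
    push_cast
    linear_combination (-4 * (α : ℂ) ^ 2) * h + (4 * (α : ℂ) ^ 2 * s ^ 2) * I_sq
  have hquot : 2 * (α : ℂ) / (1 + -(1 + 2 * I * α * s) + ((2 * α * c : ℝ) : ℂ)) = exp (ω * I) := by
    have hden : 1 + -(1 + 2 * I * α * s) + ((2 * α * c : ℝ) : ℂ) = 2 * α * exp (-(ω * I)) := by
      rw [← hexp]
      push_cast
      ring
    have hα' : (2 * α : ℂ) ≠ 0 := by exact_mod_cast (by positivity : 2 * α ≠ 0)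
    rw [hden, Complex.exp_neg, div_mul_eq_div_div, div_self hα', one_div, inv_inv]
  have hlog : Complex.log (exp (ω * I)) = ω * I := by
    have hπ := Real.pi_pos
    apply Complex.log_exp <;> simp only [mul_I_im, ofReal_re] <;> linarith [hω.1, hω.2]
  rw [chi, hsq, csqrt_ofReal_sq (by positivity), hquot, hlog]
  push_cast
  linear_combination (-(α : ℂ) * ω * s) * I_sq

lemma hasDerivAt_boundary_profile (α x : ℝ) :
    HasDerivAt (fun ω : ℝ => α * Real.cos ω + α * (ω - π / 2) * Real.sin ω)
      (α * (x - π / 2) * Real.cos x) x := by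
  have h := ((Real.hasDerivAt_cos x).const_mul α).add
    ((((hasDerivAt_id x).sub_const (π / 2)).mul (Real.hasDerivAt_sin x)).const_mul α)
  refine (h.congr_deriv ?_).congr_of_eventuallyEq (.of_forall fun ω => ?_)
  · simp only [id_eq]; ring
  · simp only [Pi.add_apply, Pi.mul_apply, id_eq]; ring

lemma strictAntiOn_boundary_profile {α : ℝ} (hα : 0 < α) :
    StrictAntiOn (fun ω : ℝ => α * Real.cos ω + α * (ω - π / 2) * Real.sin ω)
      (Set.Icc (-(π / 2)) (π / 2)) := by
  apply strictAntiOn_of_deriv_neg (convex_Icc _ _) (by fun_prop)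
  intro x hx
  rw [interior_Icc] at hx
  rw [(hasDerivAt_boundary_profile α x).deriv]
  have hcos : 0 < Real.cos x := Real.cos_pos_of_mem_Ioo hx
  have hx' : x - π / 2 < 0 := by linarith [hx.2]
  exact mul_neg_of_neg_of_pos (mul_neg_of_pos_of_neg hα hx') hcos

theorem chi_right_side_boundary (α : ℝ) (hα : 0 < α) :
    (∀ ω ∈ Set.Icc (0 : ℝ) (Real.pi / 2),
      (chi α (-(1 + 2 * Complex.I * (α : ℂ) * (Real.sin ω : ℂ))) +
        Complex.I * (Real.pi : ℂ) / 4 * (1 + 2 * Complex.I * (α : ℂ) * (Real.sin ω : ℂ))).re =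
        α * Real.cos ω + α * (ω - Real.pi / 2) * Real.sin ω) ∧
    StrictAntiOn (fun ω : ℝ => α * Real.cos ω + α * (ω - Real.pi / 2) * Real.sin ω)
      (Set.Icc (0 : ℝ) (Real.pi / 2)) ∧
    (∀ ω ∈ Set.Icc (0 : ℝ) (Real.pi / 2),
      (α * Real.cos ω + α * (ω - Real.pi / 2) * Real.sin ω = 0 ↔ ω = Real.pi / 2)) := by
  have hπ := Real.pi_pos
  have hsub : Set.Icc (0 : ℝ) (π / 2) ⊆ Set.Icc (-(π / 2)) (π / 2) :=
    Set.Icc_subset_Icc_left (by linarith)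
  have hanti := (strictAntiOn_boundary_profile hα).mono hsub
  refine ⟨fun ω hω => ?_, hanti, fun ω hω => ?_⟩
  · rw [chi_neg_one_add_two_I_mul_sin hα (hsub hω)]
    generalize Real.sin ω = s, Real.cos ω = c
    simp only [add_re, mul_re, mul_im, add_im, ofReal_re, ofReal_im, I_re, I_im, one_re, one_im,
      re_ofNat, im_ofNat, div_ofNat_re, div_ofNat_im]
    ring
  · have hend : π / 2 ∈ Set.Icc (0 : ℝ) (π / 2) := Set.right_mem_Icc.mpr (by linarith)
    rw [← hanti.injOn.eq_iff hω hend]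
    simp
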